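/- arXiv:1604.04470 — 3 statements merged into one kernel-verified Lean document; each statement's English description precedes it below -/
import Mathlib

section
/- For every integer n ≥ 1, the numbers Δ^(n)_{r,s} with 1 ≤ r ≤ n+1, 1 ≤ s ≤ n+3 and r − s odd are mutually distinct; that is, if 1 ≤ r, r' ≤ n+1, 1 ≤ s, s' ≤ n+3, r − s is odd, r' − s' is odd, and Δ^(n)_{r,s} = Δ^(n)_{r',s'}, then r = r' and s = s'. -/
/-- The Ramond-sector parameter `Δ^(n)_{r,s}`. -/
noncomputable def Del (n : ℕ) (r s : ℤ) : ℝ :=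
  ((s : ℝ) * ((n : ℝ) + 2) - (r : ℝ) * ((n : ℝ) + 4)) /
    Real.sqrt (8 * ((n : ℝ) + 2) * ((n : ℝ) + 4))

theorem stmt_5 (n : ℕ) (hn : 1 ≤ n) (r r' s s' : ℤ)
    (hr1 : 1 ≤ r) (hr2 : r ≤ (n : ℤ) + 1) (hs1 : 1 ≤ s) (hs2 : s ≤ (n : ℤ) + 3)
    (hr1' : 1 ≤ r') (hr2' : r' ≤ (n : ℤ) + 1) (hs1' : 1 ≤ s') (hs2' : s' ≤ (n : ℤ) + 3)
    (hodd : Odd (r - s)) (hodd' : Odd (r' - s'))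
    (heq : Del n r s = Del n r' s') :
    r = r' ∧ s = s' := by
  have hnpos : (0 : ℝ) < (n : ℝ) := by exact_mod_cast Nat.pos_of_ne_zero (by omega)
  have hdpos : (0 : ℝ) < Real.sqrt (8 * ((n : ℝ) + 2) * ((n : ℝ) + 4)) :=
    Real.sqrt_pos.mpr (by nlinarith)
  have hd : Real.sqrt (8 * ((n : ℝ) + 2) * ((n : ℝ) + 4)) ≠ 0 := ne_of_gt hdpos
  rw [Del, Del, div_eq_div_iff hd hd] at heq
  have hnum : ((s : ℝ) * ((n : ℝ) + 2) - (r : ℝ) * ((n : ℝ) + 4))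
      = ((s' : ℝ) * ((n : ℝ) + 2) - (r' : ℝ) * ((n : ℝ) + 4)) :=
    mul_right_cancel₀ hd heq
  have key : s * ((n : ℤ) + 2) - r * ((n : ℤ) + 4)
      = s' * ((n : ℤ) + 2) - r' * ((n : ℤ) + 4) := by exact_mod_cast hnum
  set a : ℤ := r - r' with ha
  set b : ℤ := s - s' with hb
  have h1 : (b - a) * ((n : ℤ) + 2) = 2 * a := by ring_nf; ring_nf at key; linarith
  -- parity: a - b is even
  have hev : Even (b - a) := by
    rcases hodd with ⟨k, hk⟩; rcases hodd' with ⟨m, hm⟩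
    exact ⟨m - k, by omega⟩
  have hba : b - a = 0 := by
    by_contra h
    have h2 : 2 ≤ |b - a| := by
      rcases hev with ⟨k, hk⟩
      rcases abs_cases (b - a) with ⟨h3, _⟩ | ⟨h3, _⟩ <;> omega
    have h4 : |b - a| * ((n : ℤ) + 2) = |2 * a| := by
      rw [← abs_of_nonneg (show (0:ℤ) ≤ (n:ℤ)+2 by positivity), ← abs_mul, h1]
    have h5 : |2 * a| ≤ 2 * n := by
      rcases abs_cases (2 * a) with ⟨h6, _⟩ | ⟨h6, _⟩ <;> omega
    nlinarith [abs_nonneg (b - a)]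
  have ha0 : a = 0 := by rw [hba] at h1; omega
  constructor <;> omega
end

section
/- For every integer n ≥ 1, all integers 1 ≤ r, r' ≤ n+1 and 1 ≤ s, s' ≤ n+3 with r − s odd and r' − s' odd, and every nonzero integer i, one has h^(n)_{r',s',1/2} ≠ h^(n)_{r,s,1/2}(i). (This is the key arithmetic step showing that no irreducible Ramond-sector highest weight occurs as the weight of a singular vector of the Verma module M_R(c¹_n, Δ^(n)_{r,s}), which yields the Z₂-rationality of L_NS(c¹_n, 0).) -/
/-- The conformal weight `h^(n)_{r,s,1/2}` of the Ramond sector of the unitary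
`N = 1` super Virasoro minimal model of central charge `c¹_n`. -/
noncomputable def hR (n : ℕ) (r s : ℤ) : ℚ :=
  (((r : ℚ) * ((n : ℚ) + 4) - (s : ℚ) * ((n : ℚ) + 2)) ^ 2 - 4) /
    (8 * ((n : ℚ) + 2) * ((n : ℚ) + 4)) + 1 / 16

/-- The weight `h^(n)_{r,s,1/2}(i)` of the `i`-th singular vector of the Verma
module `M_R(c¹_n, Δ^(n)_{r,s})` over the Ramond algebra. -/
noncomputable def hRsing (n : ℕ) (r s : ℤ) (i : ℤ) : ℚ :=
  if Even i then
    ((((i : ℚ) * ((n : ℚ) + 2) + (r : ℚ)) * ((n : ℚ) + 4) - (s : ℚ) * ((n : ℚ) + 2)) ^ 2 - 4) /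
      (8 * ((n : ℚ) + 2) * ((n : ℚ) + 4)) + 1 / 16
  else
    (((((i : ℚ) - 1) * ((n : ℚ) + 2) + (r : ℚ)) * ((n : ℚ) + 4) + (s : ℚ) * ((n : ℚ) + 2)) ^ 2 - 4) /
      (8 * ((n : ℚ) + 2) * ((n : ℚ) + 4)) + 1 / 16

/-- If `a*(p+2) = b*p` and `b - a` is even, then `(a, b) = d*(p, p+2)` for some `d`. -/
lemma keyA (p a b : ℤ) (h : a * (p + 2) = b * p) (hpar : ∃ c, b - a = 2 * c) :
    ∃ d, a = d * p ∧ b = d * (p + 2) := by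
  obtain ⟨c, hc⟩ := hpar
  have h2 : 2 * a = 2 * (c * p) := by linear_combination h + p * hc
  have h3 : a = c * p := by linarith
  exact ⟨c, h3, by linear_combination hc + h3⟩

/-- If `a*p = b*(p+2)` and `a - b` is even, then `(a, b) = d*(p+2, p)` for some `d`. -/
lemma keyB (p a b : ℤ) (h : a * p = b * (p + 2)) (hpar : ∃ c, a - b = 2 * c) :
    ∃ d, a = d * (p + 2) ∧ b = d * p := by
  obtain ⟨c, hc⟩ := hpar
  have h2 : 2 * b = 2 * (c * p) := by linear_combination -h + p * hc
  have h3 : b = c * p := by linarith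
  exact ⟨c, by linear_combination hc + h3, h3⟩

/-- Integer core of the theorem, case of even `i`. -/
lemma even_case (m r r' s s' i : ℤ) (hm : 1 ≤ m)
    (hr1 : 1 ≤ r) (hr2 : r ≤ m + 1) (hs1 : 1 ≤ s) (hs2 : s ≤ m + 3)
    (hr1' : 1 ≤ r') (hr2' : r' ≤ m + 1) (hs1' : 1 ≤ s') (hs2' : s' ≤ m + 3)
    (hi : i ≠ 0) (hieven : Even i)
    (hkey : (r' * (m + 4) - s' * (m + 2)) ^ 2
      = ((i * (m + 2) + r) * (m + 4) - s * (m + 2)) ^ 2) : False := by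
  have hfac : ((r' * (m + 4) - s' * (m + 2)) - ((i * (m + 2) + r) * (m + 4) - s * (m + 2)))
      * ((r' * (m + 4) - s' * (m + 2)) + ((i * (m + 2) + r) * (m + 4) - s * (m + 2))) = 0 := by
    linear_combination hkey
  have h4 : (0:ℤ) ≤ m + 4 := by linarith
  have h2 : (0:ℤ) ≤ m + 2 := by linarith
  have hC : (0:ℤ) < (m + 2) * (m + 4) := by positivity
  have t1 : r' * (m + 4) ≤ (m + 1) * (m + 4) := mul_le_mul_of_nonneg_right hr2' h4
  have t2 : 1 * (m + 2) ≤ s' * (m + 2) := mul_le_mul_of_nonneg_right hs1' h2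
  have t3 : s' * (m + 2) ≤ (m + 3) * (m + 2) := mul_le_mul_of_nonneg_right hs2' h2
  have t4 : 1 * (m + 4) ≤ r' * (m + 4) := mul_le_mul_of_nonneg_right hr1' h4
  have u1 : r * (m + 4) ≤ (m + 1) * (m + 4) := mul_le_mul_of_nonneg_right hr2 h4
  have u2 : 1 * (m + 2) ≤ s * (m + 2) := mul_le_mul_of_nonneg_right hs1 h2
  have u3 : s * (m + 2) ≤ (m + 3) * (m + 2) := mul_le_mul_of_nonneg_right hs2 h2
  have u4 : 1 * (m + 4) ≤ r * (m + 4) := mul_le_mul_of_nonneg_right hr1 h4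
  have c1 : (m + 1) * (m + 4) = (m + 2) * (m + 4) - (m + 4) := by ring
  have c2 : (m + 3) * (m + 2) = (m + 2) * (m + 4) - (m + 2) := by ring
  have b1 : r' * (m + 4) - s' * (m + 2) < (m + 2) * (m + 4) := by linarith
  have b2 : -((m + 2) * (m + 4)) < r' * (m + 4) - s' * (m + 2) := by linarith
  have b3 : r * (m + 4) - s * (m + 2) < (m + 2) * (m + 4) := by linarith
  have b4 : -((m + 2) * (m + 4)) < r * (m + 4) - s * (m + 2) := by linarith
  obtain ⟨k, hk⟩ := hieven
  rcases mul_eq_zero.mp hfac with h0 | h0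
  · have e : i * ((m + 2) * (m + 4))
        = (r' * (m + 4) - s' * (m + 2)) - (r * (m + 4) - s * (m + 2)) := by
      linear_combination -h0
    have hlt : i < 2 := by
      have h' : i * ((m + 2) * (m + 4)) < 2 * ((m + 2) * (m + 4)) := by linarith
      exact lt_of_mul_lt_mul_right h' (le_of_lt hC)
    have hgt : -2 < i := by
      have h' : (-2) * ((m + 2) * (m + 4)) < i * ((m + 2) * (m + 4)) := by linarith
      exact lt_of_mul_lt_mul_right h' (le_of_lt hC)
    omega
  · have e : i * ((m + 2) * (m + 4))
        = -(r' * (m + 4) - s' * (m + 2)) - (r * (m + 4) - s * (m + 2)) := by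
      linear_combination h0
    have hlt : i < 2 := by
      have h' : i * ((m + 2) * (m + 4)) < 2 * ((m + 2) * (m + 4)) := by linarith
      exact lt_of_mul_lt_mul_right h' (le_of_lt hC)
    have hgt : -2 < i := by
      have h' : (-2) * ((m + 2) * (m + 4)) < i * ((m + 2) * (m + 4)) := by linarith
      exact lt_of_mul_lt_mul_right h' (le_of_lt hC)
    omega

/-- Integer core of the theorem, case of odd `i`. -/
lemma odd_case (m r r' s s' i : ℤ) (hm : 1 ≤ m)
    (hr1 : 1 ≤ r) (hr2 : r ≤ m + 1) (hs1 : 1 ≤ s) (hs2 : s ≤ m + 3)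
    (hr1' : 1 ≤ r') (hr2' : r' ≤ m + 1) (hs1' : 1 ≤ s') (hs2' : s' ≤ m + 3)
    (hodd : Odd (r - s)) (hodd' : Odd (r' - s'))
    (hi : i ≠ 0) (hiodd : Odd i)
    (hkey : (r' * (m + 4) - s' * (m + 2)) ^ 2
      = (((i - 1) * (m + 2) + r) * (m + 4) + s * (m + 2)) ^ 2) : False := by
  obtain ⟨k, hk⟩ := hiodd
  obtain ⟨k1, hk1⟩ := hodd
  obtain ⟨k2, hk2⟩ := hodd'
  have hfac : ((r' * (m + 4) - s' * (m + 2)) - (((i - 1) * (m + 2) + r) * (m + 4) + s * (m + 2)))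
      * ((r' * (m + 4) - s' * (m + 2)) + (((i - 1) * (m + 2) + r) * (m + 4) + s * (m + 2))) = 0 := by
    linear_combination hkey
  have h4 : (0:ℤ) ≤ m + 4 := by linarith
  have h2 : (0:ℤ) ≤ m + 2 := by linarith
  have hC : (0:ℤ) < (m + 2) * (m + 4) := by positivity
  have t1 : r' * (m + 4) ≤ (m + 1) * (m + 4) := mul_le_mul_of_nonneg_right hr2' h4
  have t2 : 1 * (m + 2) ≤ s' * (m + 2) := mul_le_mul_of_nonneg_right hs1' h2
  have t3 : s' * (m + 2) ≤ (m + 3) * (m + 2) := mul_le_mul_of_nonneg_right hs2' h2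
  have t4 : 1 * (m + 4) ≤ r' * (m + 4) := mul_le_mul_of_nonneg_right hr1' h4
  have u1 : r * (m + 4) ≤ (m + 1) * (m + 4) := mul_le_mul_of_nonneg_right hr2 h4
  have u2 : 1 * (m + 2) ≤ s * (m + 2) := mul_le_mul_of_nonneg_right hs1 h2
  have u3 : s * (m + 2) ≤ (m + 3) * (m + 2) := mul_le_mul_of_nonneg_right hs2 h2
  have u4 : 1 * (m + 4) ≤ r * (m + 4) := mul_le_mul_of_nonneg_right hr1 h4
  have c1 : (m + 1) * (m + 4) = (m + 2) * (m + 4) - (m + 4) := by ring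
  have c2 : (m + 3) * (m + 2) = (m + 2) * (m + 4) - (m + 2) := by ring
  have b1 : r' * (m + 4) - s' * (m + 2) < (m + 2) * (m + 4) := by linarith
  have b2 : -((m + 2) * (m + 4)) < r' * (m + 4) - s' * (m + 2) := by linarith
  have b3 : 0 < r * (m + 4) + s * (m + 2) := by linarith
  have b4 : r * (m + 4) + s * (m + 2) < 2 * ((m + 2) * (m + 4)) := by linarith
  rcases mul_eq_zero.mp hfac with h0 | h0
  · have e : (i - 1) * ((m + 2) * (m + 4))
        = (r' * (m + 4) - s' * (m + 2)) - (r * (m + 4) + s * (m + 2)) := by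
      linear_combination -h0
    have hlt : i - 1 < 1 := by
      have h' : (i - 1) * ((m + 2) * (m + 4)) < 1 * ((m + 2) * (m + 4)) := by linarith
      exact lt_of_mul_lt_mul_right h' (le_of_lt hC)
    have hgt : -3 < i - 1 := by
      have h' : (-3) * ((m + 2) * (m + 4)) < (i - 1) * ((m + 2) * (m + 4)) := by linarith
      exact lt_of_mul_lt_mul_right h' (le_of_lt hC)
    have hii : i = 1 ∨ i = -1 := by omega
    rcases hii with rfl | rfl
    · have heq : (r' - r) * ((m + 2) + 2) = (s' + s) * (m + 2) := by linear_combination -e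
      obtain ⟨d, hd1, hd2⟩ := keyA (m + 2) (r' - r) (s' + s) heq ⟨r - k1 - k2 - 1, by omega⟩
      have hd : 1 ≤ d := by
        by_contra h'
        push_neg at h'
        have := mul_le_mul_of_nonneg_right (show d ≤ 0 by omega) h4
        simp only [zero_mul] at this
        linarith
      have := mul_le_mul_of_nonneg_right hd h2
      linarith
    · have heq : (r' - r + 2 * (m + 2)) * ((m + 2) + 2) = (s' + s) * (m + 2) := by
        linear_combination -e
      obtain ⟨d, hd1, hd2⟩ := keyA (m + 2) (r' - r + 2 * (m + 2)) (s' + s) heq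
        ⟨r - k1 - k2 - 1 - (m + 2), by omega⟩
      have hd : 2 ≤ d := by
        by_contra h'
        push_neg at h'
        have := mul_le_mul_of_nonneg_right (show d ≤ 1 by omega) h2
        simp only [one_mul] at this
        linarith
      have := mul_le_mul_of_nonneg_right hd h4
      linarith
  · have e : (i - 1) * ((m + 2) * (m + 4))
        = -(r' * (m + 4) - s' * (m + 2)) - (r * (m + 4) + s * (m + 2)) := by
      linear_combination h0
    have hlt : i - 1 < 1 := by
      have h' : (i - 1) * ((m + 2) * (m + 4)) < 1 * ((m + 2) * (m + 4)) := by linarith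
      exact lt_of_mul_lt_mul_right h' (le_of_lt hC)
    have hgt : -3 < i - 1 := by
      have h' : (-3) * ((m + 2) * (m + 4)) < (i - 1) * ((m + 2) * (m + 4)) := by linarith
      exact lt_of_mul_lt_mul_right h' (le_of_lt hC)
    have hii : i = 1 ∨ i = -1 := by omega
    rcases hii with rfl | rfl
    · have heq : (s' - s) * (m + 2) = (r' + r) * ((m + 2) + 2) := by linear_combination -e
      obtain ⟨d, hd1, hd2⟩ := keyB (m + 2) (s' - s) (r' + r) heq ⟨k1 - k2 - r, by omega⟩
      have hd : 1 ≤ d := by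
        by_contra h'
        push_neg at h'
        have := mul_le_mul_of_nonneg_right (show d ≤ 0 by omega) h2
        simp only [zero_mul] at this
        linarith
      have := mul_le_mul_of_nonneg_right hd h4
      linarith
    · have heq : (r' + r) * ((m + 2) + 2) = (s' - s + 2 * (m + 4)) * (m + 2) := by
        linear_combination e
      obtain ⟨d, hd1, hd2⟩ := keyA (m + 2) (r' + r) (s' - s + 2 * (m + 4)) heq
        ⟨k1 - k2 - r + m + 4, by omega⟩
      have hd : 2 ≤ d := by
        by_contra h'
        push_neg at h'
        have := mul_le_mul_of_nonneg_right (show d ≤ 1 by omega) h4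
        simp only [one_mul] at this
        linarith
      have := mul_le_mul_of_nonneg_right hd h2
      linarith

theorem stmt_7 (n : ℕ) (hn : 1 ≤ n) (r r' s s' : ℤ)
    (hr1 : 1 ≤ r) (hr2 : r ≤ (n : ℤ) + 1) (hs1 : 1 ≤ s) (hs2 : s ≤ (n : ℤ) + 3)
    (hr1' : 1 ≤ r') (hr2' : r' ≤ (n : ℤ) + 1) (hs1' : 1 ≤ s') (hs2' : s' ≤ (n : ℤ) + 3)
    (hodd : Odd (r - s)) (hodd' : Odd (r' - s'))
    (i : ℤ) (hi : i ≠ 0) :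
    hR n r' s' ≠ hRsing n r s i := by
  intro h
  have hm : (1 : ℤ) ≤ (n : ℤ) := by exact_mod_cast hn
  have hq2 : ((n : ℚ) + 2) ≠ 0 := by positivity
  have hq4 : ((n : ℚ) + 4) ≠ 0 := by positivity
  unfold hR hRsing at h
  rcases Int.even_or_odd i with hie | hio
  · rw [if_pos hie] at h
    have h' : (((r' : ℚ) * ((n : ℚ) + 4) - (s' : ℚ) * ((n : ℚ) + 2)) ^ 2)
        = (((i : ℚ) * ((n : ℚ) + 2) + (r : ℚ)) * ((n : ℚ) + 4) - (s : ℚ) * ((n : ℚ) + 2)) ^ 2 := by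
      field_simp at h
      linarith
    have hkey : ((r' : ℤ) * ((n : ℤ) + 4) - s' * ((n : ℤ) + 2)) ^ 2
        = ((i * ((n : ℤ) + 2) + r) * ((n : ℤ) + 4) - s * ((n : ℤ) + 2)) ^ 2 := by
      exact_mod_cast h'
    exact even_case (n : ℤ) r r' s s' i hm hr1 hr2 hs1 hs2 hr1' hr2' hs1' hs2' hi hie hkey
  · rw [if_neg (Int.not_even_iff_odd.mpr hio)] at h
    have h' : (((r' : ℚ) * ((n : ℚ) + 4) - (s' : ℚ) * ((n : ℚ) + 2)) ^ 2)
        = ((((i : ℚ) - 1) * ((n : ℚ) + 2) + (r : ℚ)) * ((n : ℚ) + 4)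
            + (s : ℚ) * ((n : ℚ) + 2)) ^ 2 := by
      field_simp at h
      linarith
    have hkey : ((r' : ℤ) * ((n : ℤ) + 4) - s' * ((n : ℤ) + 2)) ^ 2
        = (((i - 1) * ((n : ℤ) + 2) + r) * ((n : ℤ) + 4) + s * ((n : ℤ) + 2)) ^ 2 := by
      exact_mod_cast h'
    exact odd_case (n : ℤ) r r' s s' i hm hr1 hr2 hs1 hs2 hr1' hr2' hs1' hs2'
      hodd hodd' hi hio hkey
end

section
/- Let A be a commutative (not necessarily associative) C-algebra equipped with a symmetric bilinear form (·|·) satisfying the invariance property (a·b | c) = (b | a·c) for all a, b, c ∈ A. Let c_f be a nonzero complex number and suppose e, f, x ∈ A satisfy: e·e = 2e, f·f = 2f, e·f = 0, (e|e) = 1/4, (f|f) = c_f/2, e·x = (1/2)x, f·x = (3/2)x, (x|x) = 2c_f/3, and x·x lies in the linear span of e and f. Then x·x = (4c_f/3)·e + 2·f. (This is the Griess-algebra computation at the heart of Theorem 3.5, determining the product x·x in a 3-dimensional Griess algebra spanned by the conformal vector, an Ising vector and a common highest weight vector.) -/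
/-! Pairing `x·x = a e + b f` with `e` and `f` determines `a` and `b`: invariance gives
`(x·x | e) = (x | e·x) = ½ (x|x)` and `(x·x | f) = (x | f·x) = 3/2 (x|x)`, while `e` and `f` are
orthogonal because `2 (e|f) = (e·e | f) = (e | e·f) = 0`. -/

section InvariantForm

variable {K A : Type*} [Field K] [AddCommGroup A] [Module K A]
  {mul : A → A → A} {form : A → A → K}

theorem isLinearMap_form_left (hform_symm : ∀ a b, form a b = form b a)
    (hform_lin : ∀ a, IsLinearMap K (form a)) (w : A) :
    IsLinearMap K (fun v => form v w) := by
  simpa only [hform_symm _ w] using hform_lin w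

theorem form_eq_zero_of_mul_self_eq_smul_of_mul_eq_zero
    (hform_symm : ∀ a b, form a b = form b a) (hform_lin : ∀ a, IsLinearMap K (form a))
    (hinv : ∀ a b c, form (mul a b) c = form b (mul a c))
    {c : K} (hc : c ≠ 0) {e f : A} (hee : mul e e = c • e) (hef : mul e f = 0) :
    form e f = 0 := by
  have h : c * form e f = 0 := by
    rw [← smul_eq_mul, ← (isLinearMap_form_left hform_symm hform_lin f).map_smul, ← hee, hinv,
      hef, (hform_lin e).map_zero]
  exact (mul_eq_zero.mp h).resolve_left hc

theorem form_mul_self_eq_of_mul_eq_smul (hcomm : ∀ a b, mul a b = mul b a)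
    (hform_lin : ∀ a, IsLinearMap K (form a))
    (hinv : ∀ a b c, form (mul a b) c = form b (mul a c))
    {a x : A} {c : K} (hax : mul a x = c • x) :
    form (mul x x) a = c * form x x := by
  rw [hinv, hcomm, hax, (hform_lin x).map_smul, smul_eq_mul]

theorem form_smul_add_smul_of_form_eq_zero (hform_symm : ∀ a b, form a b = form b a)
    (hform_lin : ∀ a, IsLinearMap K (form a)) {e f : A} (horth : form e f = 0) (a b : K) :
    form (a • e + b • f) e = a * form e e ∧ form (a • e + b • f) f = b * form f f := by
  have hlin := isLinearMap_form_left hform_symm hform_lin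
  simp only [(hlin e).map_add, (hlin e).map_smul, (hlin f).map_add, (hlin f).map_smul,
    hform_symm f e, horth, smul_eq_mul, mul_zero, add_zero, zero_add, and_self]

end InvariantForm

theorem stmt_12_general {A : Type*} [AddCommGroup A] [Module ℂ A]
    (mul : A → A → A) (form : A → A → ℂ)
    (hcomm : ∀ a b, mul a b = mul b a)
    (hform_symm : ∀ a b, form a b = form b a)
    (hform_lin : ∀ a, IsLinearMap ℂ (form a))
    (hinv : ∀ a b c, form (mul a b) c = form b (mul a c))
    (cf : ℂ) (hcf : cf ≠ 0)
    (e f x : A)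
    (hee : mul e e = (2 : ℂ) • e)
    (hef : mul e f = 0)
    (hEe : form e e = 1 / 4)
    (hFf : form f f = cf / 2)
    (hex : mul e x = (1 / 2 : ℂ) • x)
    (hfx : mul f x = (3 / 2 : ℂ) • x)
    (hxx : form x x = 2 * cf / 3)
    (hspan : mul x x ∈ Submodule.span ℂ ({e, f} : Set A)) :
    mul x x = (4 * cf / 3) • e + (2 : ℂ) • f := by
  obtain ⟨a, b, hab⟩ := Submodule.mem_span_pair.mp hspan
  have horth : form e f = 0 :=
    form_eq_zero_of_mul_self_eq_smul_of_mul_eq_zero hform_symm hform_lin hinv two_ne_zero hee hef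
  obtain ⟨hae, hbf⟩ := form_smul_add_smul_of_form_eq_zero hform_symm hform_lin horth a b
  rw [hab, form_mul_self_eq_of_mul_eq_smul hcomm hform_lin hinv hex, hxx, hEe] at hae
  rw [hab, form_mul_self_eq_of_mul_eq_smul hcomm hform_lin hinv hfx, hxx, hFf] at hbf
  have ha : a = 4 * cf / 3 := by linear_combination -4 * hae
  have hb : b = 2 := mul_right_cancel₀ hcf (by linear_combination -2 * hbf)
  rw [← hab, ha, hb]

theorem stmt_12 {A : Type*} [AddCommGroup A] [Module ℂ A]
    (mul : A → A → A) (form : A → A → ℂ)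
    (hcomm : ∀ a b, mul a b = mul b a)
    (hmul_lin : ∀ a, IsLinearMap ℂ (mul a))
    (hform_symm : ∀ a b, form a b = form b a)
    (hform_lin : ∀ a, IsLinearMap ℂ (form a))
    (hinv : ∀ a b c, form (mul a b) c = form b (mul a c))
    (cf : ℂ) (hcf : cf ≠ 0)
    (e f x : A)
    (hee : mul e e = (2 : ℂ) • e)
    (hff : mul f f = (2 : ℂ) • f)
    (hef : mul e f = 0)
    (hEe : form e e = 1 / 4)
    (hFf : form f f = cf / 2)
    (hex : mul e x = (1 / 2 : ℂ) • x)
    (hfx : mul f x = (3 / 2 : ℂ) • x)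
    (hxx : form x x = 2 * cf / 3)
    (hspan : mul x x ∈ Submodule.span ℂ ({e, f} : Set A)) :
    mul x x = (4 * cf / 3) • e + (2 : ℂ) • f :=
  stmt_12_general mul form hcomm hform_symm hform_lin hinv cf hcf e f x hee hef hEe hFf hex hfx hxx
    hspan
end
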